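/- arXiv:2603.09516 — 6 statements merged into one kernel-verified Lean document; each statement's English description precedes it below -/
import Mathlib

section
/- Let K be a field, V a finite-dimensional K-vector space, E a finite type, (H_i)_{i∈E} a hyperplane arrangement in V, λ_i : V → K linear functionals with ker λ_i = H_i, and λ : V → K^E the induced linear map λ(v) = (λ_i(v))_{i∈E}. Then λ is injective, and for every subset B ⊆ E the following are equivalent: (i) B is a basis of the matroid M_𝒜 of the arrangement (whose rank function is S ↦ dim V − dim ⋂_{i∈S} H_i); (ii) ⋂_{i∈B} H_i = {0} and the cardinality of B equals dim V; (iii) the coordinate projection π_B : K^E → K^B restricts to a linear isomorphism λ(V) ≃ K^B. In particular, M_𝒜 equals the matroid M_{λ(V)} of the subspace λ(V) ⊆ K^E. -/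
open Set Function Module Submodule

/-- The coordinate projection `K^E → K^S` for a subset `S ⊆ E`. -/
def proj (K : Type*) [Semiring K] {E : Type*} (S : Set E) : (E → K) →ₗ[K] (↥S → K) :=
  LinearMap.funLeft K K Subtype.val

/-- The rank function of a matroid: the size of a largest independent subset of `S`. -/
noncomputable def mrk {E : Type*} (M : Matroid E) (S : Set E) : ℕ :=
  sSup (Set.ncard '' {I : Set E | M.Indep I ∧ I ⊆ S})

/-- `M` is the matroid `M_W` of the linear subspace `W ⊆ K^E`: its ground set is all of `E`
and its rank function is `S ↦ dim_K π_S(W)`. -/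
def IsMatroidOf {K E : Type*} [Field K] (M : Matroid E) (W : Submodule K (E → K)) : Prop :=
  M.E = Set.univ ∧ ∀ S : Set E, mrk M S = Module.finrank K ↥(W.map (proj K S))

/-- A hyperplane arrangement in a finite-dimensional `K`-vector space `V` indexed by `E`:
a family of pairwise distinct codimension-one subspaces of `V` with trivial intersection. -/
def IsHyperplaneArrangement {K V E : Type*} [Field K] [AddCommGroup V] [Module K V]
    (H : E → Submodule K V) : Prop :=
  Function.Injective H ∧ (∀ i, Module.finrank K (V ⧸ H i) = 1) ∧ (⨅ i, H i) = ⊥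

/-!
Writing `λ = (λ_i)`, the kernel of `π_S ∘ λ` is `⋂_{i ∈ S} H_i`, so rank–nullity identifies the
arrangement rank `dim V - dim ⋂_{i ∈ S} H_i` with `dim π_S(λ V)`; for `S = E` this kernel is `0`,
so `λ` is injective. A basis of `M` is an independent set of size `rank M = dim V`, i.e. a set `B`
with `⋂_{i ∈ B} H_i = 0` and `#B = dim V`, which says exactly that the square map
`π_B ∘ λ : V → K^B` is bijective.
-/

namespace Matroid

variable {α : Type*} [Finite α] {M : Matroid α} {I B X : Set α}

lemma IsBasis'.mrk_eq_ncard (hI : M.IsBasis' I X) : mrk M X = I.ncard := by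
  refine IsGreatest.csSup_eq ⟨⟨I, ⟨hI.indep, hI.subset⟩, rfl⟩, ?_⟩
  rintro _ ⟨J, ⟨hJ, hJX⟩, rfl⟩
  have hJI : J.encard ≤ I.encard :=
    (hJ.encard_le_eRk_of_subset hJX).trans_eq hI.encard_eq_eRk.symm
  rwa [← J.coe_ncard_eq_encard, ← I.coe_ncard_eq_encard, Nat.cast_le] at hJI

lemma indep_iff_mrk_eq_ncard : M.Indep I ↔ mrk M I = I.ncard := by
  refine ⟨fun hI => hI.isBasis_self.isBasis'.mrk_eq_ncard, fun h => ?_⟩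
  obtain ⟨J, hJ⟩ := M.exists_isBasis' I
  rw [hJ.mrk_eq_ncard] at h
  exact Set.eq_of_subset_of_ncard_le hJ.subset h.ge ▸ hJ.indep

lemma isBase_iff_indep_and_ncard_eq_mrk_univ :
    M.IsBase B ↔ M.Indep B ∧ B.ncard = mrk M univ := by
  have isBasis'_univ_iff {J : Set α} : M.IsBasis' J univ ↔ M.IsBase J := by
    rw [isBasis'_iff_isBasis_inter_ground, univ_inter, isBasis_ground_iff]
  refine ⟨fun hB => ⟨hB.indep, (isBasis'_univ_iff.2 hB).mrk_eq_ncard.symm⟩,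
    fun ⟨hB, hcard⟩ => ?_⟩
  obtain ⟨J, hJ, hBJ⟩ := hB.subset_isBasis'_of_subset (subset_univ B)
  rw [hJ.mrk_eq_ncard] at hcard
  exact Set.eq_of_subset_of_ncard_le hBJ hcard.ge ▸ isBasis'_univ_iff.1 hJ

end Matroid

lemma ker_proj_comp_pi {R V E : Type*} [CommSemiring R] [AddCommMonoid V] [Module R V]
    (l : E → V →ₗ[R] R) (S : Set E) :
    LinearMap.ker (proj R S ∘ₗ LinearMap.pi l) = ⨅ i ∈ S, LinearMap.ker (l i) := by
  rw [show proj R S ∘ₗ LinearMap.pi l = LinearMap.pi fun i : S => l i from rfl, LinearMap.ker_pi]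
  exact iInf_subtype'' S fun i => LinearMap.ker (l i)

lemma LinearMap.bijective_comp_range_subtype_iff {R U V W : Type*} [Ring R] [AddCommGroup U]
    [AddCommGroup V] [AddCommGroup W] [Module R U] [Module R V] [Module R W]
    {f : U →ₗ[R] V} (hf : Injective f) (g : V →ₗ[R] W) :
    Bijective (g ∘ₗ (range f).subtype) ↔ Bijective (g ∘ₗ f) := by
  rw [← Bijective.of_comp_iff _ (LinearEquiv.ofInjective f hf).bijective]
  rfl

lemma LinearMap.bijective_iff_ker_eq_bot_and_finrank_eq {K V W : Type*} [DivisionRing K]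
    [AddCommGroup V] [AddCommGroup W] [Module K V] [Module K W] [FiniteDimensional K V]
    [FiniteDimensional K W] (g : V →ₗ[K] W) :
    Bijective g ↔ ker g = ⊥ ∧ finrank K V = finrank K W := by
  rw [ker_eq_bot]
  exact ⟨fun hg => ⟨hg.injective, (LinearEquiv.ofBijective g hg).finrank_eq⟩,
    fun ⟨hinj, hdim⟩ => ⟨hinj, (injective_iff_surjective_of_finrank_eq_finrank hdim).1 hinj⟩⟩

lemma finrank_set_fun_eq_ncard {K E : Type*} [Field K] (S : Set E) [Finite S] :
    finrank K (S → K) = S.ncard := by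
  have := Fintype.ofFinite S
  rw [Module.finrank_fintype_fun_eq_card, Fintype.card_eq_nat_card, Nat.card_coe_set_eq]

lemma finrank_map_proj_range_pi {K V E : Type*} [Field K] [AddCommGroup V] [Module K V]
    [FiniteDimensional K V] (l : E → V →ₗ[K] K) (S : Set E) :
    finrank K ((LinearMap.range (LinearMap.pi l)).map (proj K S)) =
      finrank K V - finrank K ↥(⨅ i ∈ S, LinearMap.ker (l i)) := by
  rw [← LinearMap.range_comp, ← ker_proj_comp_pi]
  have := (proj K S ∘ₗ LinearMap.pi l).finrank_range_add_finrank_ker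
  omega

/-- for a hyperplane arrangement with associated embedding `λ = (λ_i) : V → K^E`,
the map `λ` is injective; a subset `B ⊆ E` is a basis of the matroid `M_𝒜` of the arrangement
iff `⋂_{i ∈ B} H i = 0` and `#B = dim V`, iff the coordinate projection `π_B` restricts to an
isomorphism `λ(V) ≃ K^B`; and `M_𝒜` is the matroid of the subspace `λ(V) ⊆ K^E`. -/
theorem stmt2 {K V E : Type*} [Field K] [AddCommGroup V] [Module K V] [FiniteDimensional K V]
    [Fintype E] (H : E → Submodule K V) (hH : IsHyperplaneArrangement H)
    (l : E → (V →ₗ[K] K)) (hl : ∀ i, LinearMap.ker (l i) = H i)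
    (M : Matroid E) (hME : M.E = Set.univ)
    (hMr : ∀ S : Set E,
      mrk M S = Module.finrank K V - Module.finrank K ↥(⨅ i ∈ S, H i)) :
    Function.Injective (LinearMap.pi l) ∧
    (∀ B : Set E,
      (M.IsBase B ↔ (⨅ i ∈ B, H i) = ⊥ ∧ B.ncard = Module.finrank K V) ∧
      (M.IsBase B ↔ Function.Bijective
        ((proj K B) ∘ₗ (LinearMap.range (LinearMap.pi l)).subtype))) ∧
    IsMatroidOf M (LinearMap.range (LinearMap.pi l)) := by
  obtain rfl : H = fun i => LinearMap.ker (l i) := funext fun i => (hl i).symm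
  beta_reduce at hH hMr
  have hbot : (⨅ i, LinearMap.ker (l i)) = ⊥ := hH.2.2
  have hinj : Injective (LinearMap.pi l) := by
    rwa [← LinearMap.ker_eq_bot, LinearMap.ker_pi]
  have hrank_univ : mrk M univ = finrank K V := by
    rw [hMr, iInf_univ, hbot, finrank_bot, Nat.sub_zero]
  have hbase : ∀ B : Set E,
      M.IsBase B ↔ (⨅ i ∈ B, LinearMap.ker (l i)) = ⊥ ∧ B.ncard = finrank K V := by
    intro B
    rw [Matroid.isBase_iff_indep_and_ncard_eq_mrk_univ, Matroid.indep_iff_mrk_eq_ncard, hMr,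
      hrank_univ, ← Submodule.finrank_eq_zero]
    have := Submodule.finrank_le (⨅ i ∈ B, LinearMap.ker (l i))
    omega
  refine ⟨hinj, fun B => ⟨hbase B, ?_⟩, hME, fun S => by rw [hMr, finrank_map_proj_range_pi]⟩
  rw [hbase, LinearMap.bijective_comp_range_subtype_iff hinj,
    LinearMap.bijective_iff_ker_eq_bot_and_finrank_eq, ker_proj_comp_pi,
    finrank_set_fun_eq_ncard, eq_comm (a := finrank K V)]
end

section
/- Let K be a field, E a finite type, and M a matroid of rank r on E with hyperplane set 𝓗. Suppose η assigns to each hyperplane H ∈ 𝓗 a vector η_H ∈ K^E with supp(η_H) = E ∖ H, such that for every triple of pairwise distinct hyperplanes H₁, H₂, H₃ ∈ 𝓗 whose intersection H₁ ∩ H₂ ∩ H₃ has corank 2 in M, the vectors η_{H₁}, η_{H₂}, η_{H₃} are K-linearly dependent. Then the subspace W = span{η_H : H ∈ 𝓗} ⊆ K^E satisfies M_W = M; in particular dim_K W = r and rank_M(S) = dim_K π_S(W) for every S ⊆ E. -/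
/-!
For a basis `I` of `S` extended to a base `B`, the vectors of the hyperplanes `cl (B \ {i})`,
`i ∈ I`, restrict to a diagonal family on `I`, so `rk S ≤ dim π_S(W)`.

Conversely, let `W_F` be the span of the `η_H` with `F ⊆ H`. For hyperplanes `H₁ ≠ H₂`
containing `F` and avoiding `e`, one has `η_{H₂} ∈ K η_{H₁} + W_{F ∪ {e}}`: a corank-2 flat
between `H₁ ∩ H₂` and `H₂` yields a modular triple `H₂, H, H₃` with `e ∈ H₃`, where `H` avoids
`e` and meets `H₁` in a flat of larger rank, so induction on the corank of `H₁ ∩ H₂` applies.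
Comparing coefficients at `e` shows that a vector of `W_F` vanishing at `e` lies in
`W_{F ∪ {e}}`. Hence a vector of `W` vanishing on `I` lies in `W_I` and vanishes on
`cl I ⊇ S`: the restriction `π_S(W) → K^I` is injective and `dim π_S(W) ≤ rk S`.
-/

open Set Function Module Submodule

/-- A hyperplane of a matroid: a flat of rank one less than the rank of the matroid. -/
def IsHyperplaneOf {E : Type*} (M : Matroid E) (H : Set E) : Prop :=
  M.IsFlat H ∧ mrk M H + 1 = mrk M M.E

namespace Matroid

variable {E : Type*} {M : Matroid E} {S T : Set E}

lemma IsFlat.inter (hS : M.IsFlat S) (hT : M.IsFlat T) : M.IsFlat (S ∩ T) := by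
  rw [inter_eq_iInter]
  exact IsFlat.iInter (by rintro (_ | _) <;> assumption)

end Matroid

section Rank

variable {E : Type*} [Finite E] {M : Matroid E} {S T I L F H : Set E} {e : E}

lemma cast_mrk_eq_eRk (M : Matroid E) (S : Set E) : (mrk M S : ℕ∞) = M.eRk S := by
  obtain ⟨I, hI⟩ := M.exists_isBasis' S
  suffices mrk M S = I.ncard by rw [this, I.toFinite.cast_ncard_eq, hI.encard_eq_eRk]
  refine le_antisymm (csSup_le ⟨0, ∅, ⟨M.empty_indep, empty_subset S⟩, ncard_empty E⟩ ?_)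
    (le_csSup (Set.toFinite _).bddAbove ⟨I, ⟨hI.indep, hI.subset⟩, rfl⟩)
  rintro _ ⟨J, ⟨hJ, hJS⟩, rfl⟩
  have hJI := hJ.encard_le_eRk_of_subset hJS
  rw [← hI.encard_eq_eRk, ← J.toFinite.cast_ncard_eq, ← I.toFinite.cast_ncard_eq] at hJI
  exact_mod_cast hJI

lemma Matroid.IsBasis'.mrk_eq_ncard_s6 (hI : M.IsBasis' I S) : mrk M S = I.ncard := by
  have h := cast_mrk_eq_eRk M S
  rwa [← hI.encard_eq_eRk, ← I.toFinite.cast_ncard_eq, Nat.cast_inj] at h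

lemma Matroid.Indep.mrk_eq_ncard_s6 (hI : M.Indep I) : mrk M I = I.ncard :=
  hI.isBasis_self.isBasis'.mrk_eq_ncard_s6

lemma mrk_mono (hST : S ⊆ T) : mrk M S ≤ mrk M T := by
  have h := M.eRk_mono hST
  rwa [← cast_mrk_eq_eRk, ← cast_mrk_eq_eRk, Nat.cast_le] at h

lemma mrk_closure (S : Set E) : mrk M (M.closure S) = mrk M S := by
  have h := M.eRk_closure_eq S
  rwa [← cast_mrk_eq_eRk, ← cast_mrk_eq_eRk, Nat.cast_inj] at h

lemma mrk_insert_of_mem_diff_closure (he : e ∈ M.E \ M.closure S) :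
    mrk M (insert e S) = mrk M S + 1 := by
  have h := Matroid.eRk_insert_eq_add_one he
  rwa [← cast_mrk_eq_eRk, ← cast_mrk_eq_eRk, ← Nat.cast_one, ← Nat.cast_add, Nat.cast_inj] at h

lemma Matroid.IsFlat.eq_of_subset_of_mrk_le (hF : M.IsFlat F) (hH : M.IsFlat H) (hFH : F ⊆ H)
    (h : mrk M H ≤ mrk M F) : F = H := by
  rw [← hF.closure, ← hH.closure]
  refine (M.isRkFinite_of_finite F.toFinite).closure_eq_closure_of_subset_of_eRk_ge_eRk hFH ?_
  rw [← cast_mrk_eq_eRk, ← cast_mrk_eq_eRk]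
  exact_mod_cast h

lemma Matroid.IsFlat.exists_isFlat_between (hH : M.IsFlat H) (hLH : L ⊆ H) {k : ℕ}
    (hLk : mrk M L ≤ k) (hkH : k ≤ mrk M H) :
    ∃ F, M.IsFlat F ∧ L ⊆ F ∧ F ⊆ H ∧ mrk M F = k := by
  obtain ⟨I, hI⟩ := M.exists_isBasis L (hLH.trans hH.subset_ground)
  obtain ⟨J, hJ, hIJ⟩ := hI.indep.subset_isBasis_of_subset (hI.subset.trans hLH)
  obtain ⟨U, hIU, hUJ, hU⟩ := exists_subsuperset_card_eq hIJ
    (hI.isBasis'.mrk_eq_ncard_s6 ▸ hLk) (hJ.isBasis'.mrk_eq_ncard_s6 ▸ hkH)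
  refine ⟨M.closure U, M.isFlat_closure U, ?_, ?_, ?_⟩
  · exact hI.subset_closure.trans (M.closure_subset_closure hIU)
  · exact hH.closure ▸ M.closure_subset_closure (hUJ.trans hJ.subset)
  · rw [mrk_closure, (hJ.indep.subset hUJ).mrk_eq_ncard_s6, hU]

end Rank

section Hyperplane

variable {E : Type*} [Finite E] {M : Matroid E} {L H H₁ H₂ H₃ : Set E} {e x : E}

lemma IsHyperplaneOf.eq_of_subset (h₁ : IsHyperplaneOf M H₁) (h₂ : IsHyperplaneOf M H₂)
    (h : H₁ ⊆ H₂) : H₁ = H₂ :=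
  h₁.1.eq_of_subset_of_mrk_le h₂.1 h (by have := h₁.2; have := h₂.2; omega)

lemma IsHyperplaneOf.exists_mem_notMem (h₁ : IsHyperplaneOf M H₁) (h₂ : IsHyperplaneOf M H₂)
    (hne : H₁ ≠ H₂) : ∃ x ∈ H₁, x ∉ H₂ :=
  not_subset.1 fun h => hne (h₁.eq_of_subset h₂ h)

lemma IsHyperplaneOf.mrk_inter_add_two_le (h₁ : IsHyperplaneOf M H₁)
    (h₂ : IsHyperplaneOf M H₂) (hne : H₁ ≠ H₂) : mrk M (H₁ ∩ H₂) + 2 ≤ mrk M M.E := by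
  have hlt : mrk M (H₁ ∩ H₂) < mrk M H₁ := by
    refine lt_of_le_of_ne (mrk_mono inter_subset_left) fun h => hne ?_
    have h₁₂ := (h₁.1.inter h₂.1).eq_of_subset_of_mrk_le h₁.1 inter_subset_left h.ge
    exact h₁.eq_of_subset h₂ (h₁₂ ▸ inter_subset_right)
  have := h₁.2
  omega

lemma isHyperplaneOf_closure_insert (hL : M.IsFlat L) (hLr : mrk M L + 2 = mrk M M.E)
    (hx : x ∈ M.E) (hxL : x ∉ L) : IsHyperplaneOf M (M.closure (insert x L)) := by
  refine ⟨M.isFlat_closure _, ?_⟩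
  rw [mrk_closure, mrk_insert_of_mem_diff_closure ⟨hx, hL.closure.symm ▸ hxL⟩]
  omega

lemma IsHyperplaneOf.eq_of_insert_subset (h₁ : IsHyperplaneOf M H₁) (h₂ : IsHyperplaneOf M H₂)
    (hL : M.IsFlat L) (hLr : mrk M L + 2 = mrk M M.E) (hxL : x ∉ L)
    (hH₁ : insert x L ⊆ H₁) (hH₂ : insert x L ⊆ H₂) : H₁ = H₂ := by
  by_contra hne
  have hx : x ∈ M.E \ M.closure L :=
    ⟨h₁.1.subset_ground (hH₁ (mem_insert x L)), hL.closure.symm ▸ hxL⟩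
  have hrk := mrk_mono (M := M) (subset_inter hH₁ hH₂)
  have := h₁.mrk_inter_add_two_le h₂ hne
  rw [mrk_insert_of_mem_diff_closure hx] at hrk
  omega

lemma IsHyperplaneOf.mrk_inter_inter_add_two (h₁ : IsHyperplaneOf M H₁)
    (h₂ : IsHyperplaneOf M H₂) (hne : H₁ ≠ H₂) (hL : L ⊆ H₁ ∩ H₂ ∩ H₃)
    (hLr : mrk M L + 2 = mrk M M.E) : mrk M (H₁ ∩ H₂ ∩ H₃) + 2 = mrk M M.E := by
  have hL₁₂₃ := mrk_mono (M := M) hL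
  have h₁₂₃ : mrk M (H₁ ∩ H₂ ∩ H₃) ≤ mrk M (H₁ ∩ H₂) := mrk_mono inter_subset_left
  have h₁₂ := h₁.mrk_inter_add_two_le h₂ hne
  omega

lemma IsHyperplaneOf.exists_modular_triple (h₁ : IsHyperplaneOf M H₁)
    (h₂ : IsHyperplaneOf M H₂) (hne : H₁ ≠ H₂) (he : e ∈ M.E) (he₁ : e ∉ H₁) (he₂ : e ∉ H₂) :
    ∃ H H₃, IsHyperplaneOf M H ∧ IsHyperplaneOf M H₃ ∧ H₁ ∩ H₂ ⊆ H ∧ H₁ ∩ H₂ ⊆ H₃ ∧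
      e ∉ H ∧ e ∈ H₃ ∧ H₂ ≠ H ∧ mrk M (H₂ ∩ H ∩ H₃) + 2 = mrk M M.E ∧
      mrk M (H₁ ∩ H₂) < mrk M (H₁ ∩ H) := by
  have h₁₂ := h₁.mrk_inter_add_two_le h₂ hne
  obtain ⟨L, hL, hL₁₂, hLH₂, hLr⟩ := h₂.1.exists_isFlat_between (L := H₁ ∩ H₂) inter_subset_right
    (k := mrk M M.E - 2) (by omega) (by have := h₂.2; omega)
  replace hLr : mrk M L + 2 = mrk M M.E := by omega
  have heL : e ∉ L := fun h => he₂ (hLH₂ h)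
  have h₃ := isHyperplaneOf_closure_insert hL hLr he heL
  have hLH₃ : L ⊆ M.closure (insert e L) := M.subset_closure_of_subset' (subset_insert e L)
  have heH₃ : e ∈ M.closure (insert e L) := M.mem_closure_of_mem' (mem_insert e L)
  obtain ⟨x, hx₁, hx₃⟩ := h₁.exists_mem_notMem h₃ (by rintro rfl; exact he₁ heH₃)
  have hxL : x ∉ L := fun h => hx₃ (hLH₃ h)
  have hxE : x ∈ M.E := h₁.1.subset_ground hx₁
  have h := isHyperplaneOf_closure_insert hL hLr hxE hxL
  have hLH : L ⊆ M.closure (insert x L) := M.subset_closure_of_subset' (subset_insert x L)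
  have hxH : x ∈ M.closure (insert x L) := M.mem_closure_of_mem' (mem_insert x L)
  have hx₂ : x ∉ H₂ := fun h => hxL (hL₁₂ ⟨hx₁, h⟩)
  have h₂H : H₂ ≠ M.closure (insert x L) := by rintro rfl; exact hx₂ hxH
  refine ⟨_, _, h, h₃, hL₁₂.trans hLH, hL₁₂.trans hLH₃, fun heH => hx₃ ?_, heH₃, h₂H,
    h₂.mrk_inter_inter_add_two h h₂H (subset_inter (subset_inter hLH₂ hLH) hLH₃) hLr, ?_⟩
  · rwa [← h.eq_of_insert_subset h₃ hL hLr heL (insert_subset heH hLH)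
      (insert_subset heH₃ hLH₃)]
  · have hx : x ∈ M.E \ M.closure (H₁ ∩ H₂) :=
      ⟨hxE, (h₁.1.inter h₂.1).closure.symm ▸ fun h => hx₂ h.2⟩
    have hrk : mrk M (insert x (H₁ ∩ H₂)) ≤ mrk M (H₁ ∩ M.closure (insert x L)) :=
      mrk_mono (insert_subset ⟨hx₁, hxH⟩ (subset_inter inter_subset_left (hL₁₂.trans hLH)))
    rw [mrk_insert_of_mem_diff_closure hx] at hrk
    omega

end Hyperplane

section LinearAlgebra

variable {K : Type*} [Field K]

lemma linearIndependent_of_apply_ne_zero {ι α : Type*} {v : ι → α → K} (f : ι → α)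
    (hdiag : ∀ i, v i (f i) ≠ 0) (hoff : ∀ i j, i ≠ j → v i (f j) = 0) :
    LinearIndependent K v := by
  rw [linearIndependent_iff']
  intro s g hg i hi
  have hgi := congrFun hg (f i)
  rw [Finset.sum_apply, Finset.sum_eq_single i (fun j _ hji => by simp [hoff j i hji])
    (absurd hi)] at hgi
  simpa [hdiag i] using hgi

lemma mem_span_pair_of_not_linearIndependent {V : Type*} [AddCommGroup V] [Module K V]
    {u v w : V} (huvw : ¬ LinearIndependent K ![u, v, w]) (hvw : LinearIndependent K ![v, w]) :
    u ∈ span K {v, w} := by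
  by_contra hu
  refine huvw (linearIndependent_finCons.2 ⟨hvw, ?_⟩)
  rwa [Matrix.range_cons, Matrix.range_cons, Matrix.range_empty, union_empty,
    singleton_union]

end LinearAlgebra

section HyperplaneVectors

variable {E K : Type*} [Field K] (M : Matroid E) (η : Set E → E → K)

def SupportedOffHyperplanes : Prop :=
  ∀ H, IsHyperplaneOf M H → support (η H) = univ \ H

def ModularTriplesDependent : Prop :=
  ∀ H₁ H₂ H₃ : Set E, IsHyperplaneOf M H₁ → IsHyperplaneOf M H₂ → IsHyperplaneOf M H₃ →
    H₁ ≠ H₂ → H₁ ≠ H₃ → H₂ ≠ H₃ → mrk M (H₁ ∩ H₂ ∩ H₃) + 2 = mrk M M.E →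
    ¬ LinearIndependent K ![η H₁, η H₂, η H₃]

def hyperplaneSpan (F : Set E) : Submodule K (E → K) :=
  span K (η '' {H | IsHyperplaneOf M H ∧ F ⊆ H})

variable {M η} {F H H₁ H₂ H₃ : Set E} {e : E} {w : E → K}

lemma SupportedOffHyperplanes.apply_eq_zero_iff (hη : SupportedOffHyperplanes M η)
    (hH : IsHyperplaneOf M H) : η H e = 0 ↔ e ∈ H := by
  rw [← notMem_support, hη H hH]
  simp

lemma SupportedOffHyperplanes.apply_eq_zero_of_mem_hyperplaneSpan
    (hη : SupportedOffHyperplanes M η) (he : e ∈ F) (hw : w ∈ hyperplaneSpan M η F) :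
    w e = 0 := by
  suffices hle : hyperplaneSpan M η F ≤ LinearMap.ker (LinearMap.proj e) from hle hw
  refine span_le.2 ?_
  rintro _ ⟨H, ⟨hH, hFH⟩, rfl⟩
  exact (hη.apply_eq_zero_iff hH).2 (hFH he)

lemma hyperplaneSpan_le_closure (I : Set E) :
    hyperplaneSpan M η I ≤ hyperplaneSpan M η (M.closure I) := by
  refine span_mono (image_mono ?_)
  rintro H ⟨h, hI⟩
  exact ⟨h, h.1.closure ▸ M.closure_subset_closure hI⟩

end HyperplaneVectors

section

variable {E K : Type*} [Finite E] [Field K] {M : Matroid E} {η : Set E → E → K}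
  {F H H₁ H₂ H₃ : Set E} {e : E} {w : E → K}

lemma SupportedOffHyperplanes.linearIndependent_pair (hη : SupportedOffHyperplanes M η)
    (h₁ : IsHyperplaneOf M H₁) (h₂ : IsHyperplaneOf M H₂) (hne : H₁ ≠ H₂) :
    LinearIndependent K ![η H₁, η H₂] := by
  obtain ⟨a, ha₂, ha₁⟩ := h₂.exists_mem_notMem h₁ hne.symm
  obtain ⟨b, hb₁, hb₂⟩ := h₁.exists_mem_notMem h₂ hne
  refine linearIndependent_of_apply_ne_zero ![a, b] ?_ ?_
  · intro i
    fin_cases i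
    · exact (hη.apply_eq_zero_iff h₁).not.2 ha₁
    · exact (hη.apply_eq_zero_iff h₂).not.2 hb₂
  · intro i j hij
    fin_cases i <;> fin_cases j <;> simp only [ne_eq, not_true_eq_false] at hij
    · exact (hη.apply_eq_zero_iff h₁).2 hb₁
    · exact (hη.apply_eq_zero_iff h₂).2 ha₂

lemma ModularTriplesDependent.mem_span_pair (hdep : ModularTriplesDependent M η)
    (hη : SupportedOffHyperplanes M η) (h₁ : IsHyperplaneOf M H₁) (h₂ : IsHyperplaneOf M H₂)
    (h₃ : IsHyperplaneOf M H₃) (h₁₂ : H₁ ≠ H₂) (h₁₃ : H₁ ≠ H₃) (h₂₃ : H₂ ≠ H₃)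
    (hmod : mrk M (H₁ ∩ H₂ ∩ H₃) + 2 = mrk M M.E) : η H₁ ∈ span K {η H₂, η H₃} :=
  mem_span_pair_of_not_linearIndependent (hdep H₁ H₂ H₃ h₁ h₂ h₃ h₁₂ h₁₃ h₂₃ hmod)
    (hη.linearIndependent_pair h₂ h₃ h₂₃)

lemma ModularTriplesDependent.mem_span_singleton_sup_hyperplaneSpan
    (hdep : ModularTriplesDependent M η) (hη : SupportedOffHyperplanes M η) (he : e ∈ M.E)
    {H₁ H₂ : Set E} (h₁ : IsHyperplaneOf M H₁) (h₂ : IsHyperplaneOf M H₂) (hne : H₁ ≠ H₂)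
    (hF₁ : F ⊆ H₁) (hF₂ : F ⊆ H₂) (he₁ : e ∉ H₁) (he₂ : e ∉ H₂) :
    η H₂ ∈ (K ∙ η H₁) ⊔ hyperplaneSpan M η (insert e F) := by
  obtain ⟨H, H₃, h, h₃, hH, hH₃, heH, heH₃, h₂H, hmod, hlt⟩ :=
    h₁.exists_modular_triple h₂ hne he he₁ he₂
  have hF₁₂ : F ⊆ H₁ ∩ H₂ := subset_inter hF₁ hF₂
  have hH_mem : η H ∈ (K ∙ η H₁) ⊔ hyperplaneSpan M η (insert e F) := by
    by_cases hH₁ : H₁ = H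
    · exact mem_sup_left (hH₁ ▸ mem_span_singleton_self _)
    · have : mrk M (H₁ ∩ H) ≤ mrk M M.E := mrk_mono (h₁.1.subset_ground.trans' inter_subset_left)
      exact hdep.mem_span_singleton_sup_hyperplaneSpan hη he h₁ h hH₁ hF₁ (hF₁₂.trans hH) he₁ heH
  have hH₃_mem : η H₃ ∈ hyperplaneSpan M η (insert e F) :=
    subset_span ⟨H₃, ⟨h₃, insert_subset heH₃ (hF₁₂.trans hH₃)⟩, rfl⟩
  refine span_le.2 ?_ (hdep.mem_span_pair hη h₂ h h₃ h₂H (by rintro rfl; exact he₂ heH₃)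
    (by rintro rfl; exact heH heH₃) hmod)
  rintro _ (rfl | rfl)
  exacts [hH_mem, mem_sup_right hH₃_mem]
termination_by mrk M M.E - mrk M (H₁ ∩ H₂)
decreasing_by omega

lemma ModularTriplesDependent.mem_hyperplaneSpan_insert (hdep : ModularTriplesDependent M η)
    (hη : SupportedOffHyperplanes M η) (he : e ∈ M.E) (hw : w ∈ hyperplaneSpan M η F)
    (hwe : w e = 0) : w ∈ hyperplaneSpan M η (insert e F) := by
  by_cases hex : ∃ H₁, IsHyperplaneOf M H₁ ∧ F ⊆ H₁ ∧ e ∉ H₁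
  · obtain ⟨H₁, h₁, hF₁, he₁⟩ := hex
    have hle : hyperplaneSpan M η F ≤ (K ∙ η H₁) ⊔ hyperplaneSpan M η (insert e F) := by
      refine span_le.2 ?_
      rintro _ ⟨H, ⟨h, hF⟩, rfl⟩
      by_cases heH : e ∈ H
      · exact mem_sup_right (subset_span ⟨H, ⟨h, insert_subset heH hF⟩, rfl⟩)
      by_cases hH₁ : H₁ = H
      · exact mem_sup_left (hH₁ ▸ mem_span_singleton_self _)
      · exact hdep.mem_span_singleton_sup_hyperplaneSpan hη he h₁ h hH₁ hF₁ hF he₁ heH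
    obtain ⟨_, hy, z, hz, rfl⟩ := mem_sup.1 (hle hw)
    obtain ⟨t, rfl⟩ := mem_span_singleton.1 hy
    have ht : t = 0 := by
      have hze := hη.apply_eq_zero_of_mem_hyperplaneSpan (mem_insert e F) hz
      simpa [hze, (hη.apply_eq_zero_iff h₁).not.2 he₁] using hwe
    simpa [ht] using hz
  · simp only [not_exists, not_and, not_not] at hex
    refine span_mono (image_mono ?_) hw
    rintro H ⟨h, hF⟩
    exact ⟨h, insert_subset (hex H h hF) hF⟩

lemma ModularTriplesDependent.mem_hyperplaneSpan_of_forall_apply_eq_zero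
    (hdep : ModularTriplesDependent M η) (hη : SupportedOffHyperplanes M η) {G : Set E}
    (hG : G ⊆ M.E) (hw : w ∈ hyperplaneSpan M η ∅) (hwG : ∀ e ∈ G, w e = 0) :
    w ∈ hyperplaneSpan M η G := by
  induction G, G.toFinite using Set.Finite.induction_on with
  | empty => exact hw
  | @insert e G _ _ ih =>
    refine hdep.mem_hyperplaneSpan_insert hη (hG (mem_insert e G)) ?_ (hwG e (mem_insert e G))
    exact ih ((subset_insert e G).trans hG) fun x hx => hwG x (mem_insert_of_mem e hx)

lemma ModularTriplesDependent.finrank_map_proj_le_mrk (hdep : ModularTriplesDependent M η)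
    (hη : SupportedOffHyperplanes M η) {S : Set E} (hS : S ⊆ M.E) :
    finrank K ((hyperplaneSpan M η ∅).map (proj K S)) ≤ mrk M S := by
  obtain ⟨I, hI⟩ := M.exists_isBasis S
  have : Fintype I := Fintype.ofFinite I
  set N := (hyperplaneSpan M η ∅).map (proj K S)
  let restrict : (S → K) →ₗ[K] (I → K) := LinearMap.funLeft K K (inclusion hI.subset)
  have hinj : Injective (restrict ∘ₗ N.subtype) := by
    rw [← LinearMap.ker_eq_bot, LinearMap.ker_eq_bot']
    rintro ⟨_, w, hw, rfl⟩ hwI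
    have hwI := hdep.mem_hyperplaneSpan_of_forall_apply_eq_zero hη hI.indep.subset_ground hw
      fun e he => congrFun hwI ⟨e, he⟩
    ext s
    exact hη.apply_eq_zero_of_mem_hyperplaneSpan (hI.subset_closure s.2)
      (hyperplaneSpan_le_closure I hwI)
  calc finrank K N ≤ finrank K (I → K) := LinearMap.finrank_le_finrank_of_injective hinj
    _ = mrk M S := by
      rw [Module.finrank_fintype_fun_eq_card, hI.isBasis'.mrk_eq_ncard_s6, ← Nat.card_coe_set_eq,
        Nat.card_eq_fintype_card]

lemma Matroid.IsBase.isHyperplaneOf_closure_diff_singleton {B : Set E} (hB : M.IsBase B)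
    {i : E} (hi : i ∈ B) : IsHyperplaneOf M (M.closure (B \ {i})) := by
  refine ⟨M.isFlat_closure _, ?_⟩
  rw [mrk_closure, (hB.indep.sdiff {i}).mrk_eq_ncard_s6, hB.isBasis_ground.isBasis'.mrk_eq_ncard_s6,
    ncard_sdiff_singleton_add_one hi]

lemma SupportedOffHyperplanes.mrk_le_finrank_map_proj (hη : SupportedOffHyperplanes M η)
    (S : Set E) : mrk M S ≤ finrank K ((hyperplaneSpan M η ∅).map (proj K S)) := by
  obtain ⟨I, hI⟩ := M.exists_isBasis' S
  obtain ⟨B, hB, hIB⟩ := hI.indep.exists_isBase_superset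
  have : Fintype I := Fintype.ofFinite I
  have hH (i : I) := hB.isHyperplaneOf_closure_diff_singleton (hIB i.2)
  let v (i : I) : S → K := proj K S (η (M.closure (B \ {i.1})))
  have hv : LinearIndependent K v := by
    refine linearIndependent_of_apply_ne_zero (fun i => ⟨i, hI.subset i.2⟩) (fun i => ?_)
      (fun i j hij => ?_)
    · exact (hη.apply_eq_zero_iff (hH i)).not.2 (hB.indep.notMem_closure_sdiff_of_mem (hIB i.2))
    · refine (hη.apply_eq_zero_iff (hH i)).2 (M.mem_closure_of_mem ⟨hIB j.2, ?_⟩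
        (hB.indep.sdiff _).subset_ground)
      exact fun hji => hij (Subtype.ext (mem_singleton_iff.1 hji)).symm
  have hvN : span K (range v) ≤ (hyperplaneSpan M η ∅).map (proj K S) := by
    refine span_le.2 ?_
    rintro _ ⟨i, rfl⟩
    exact mem_map_of_mem (subset_span ⟨_, ⟨hH i, empty_subset _⟩, rfl⟩)
  calc mrk M S = Fintype.card I := by
        rw [hI.mrk_eq_ncard_s6, ← Nat.card_coe_set_eq, Nat.card_eq_fintype_card]
    _ = finrank K (span K (range v)) := (finrank_span_eq_card hv).symm
    _ ≤ _ := Submodule.finrank_mono hvN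

end

lemma finrank_map_proj_univ {K E : Type*} [Field K] (W : Submodule K (E → K)) :
    finrank K (W.map (proj K univ)) = finrank K W :=
  (W.equivMapOfInjective _ (LinearMap.funLeft_injective_of_surjective K K _
    fun e => ⟨⟨e, mem_univ e⟩, rfl⟩)).finrank_eq.symm

/-- if `η` assigns to every hyperplane `H` of a rank-`r` matroid `M` a vector
supported on `E ∖ H`, such that the vectors of any modular triple of hyperplanes (pairwise
distinct, with intersection of corank 2) are linearly dependent, then
`W = span {η_H}` satisfies `M_W = M`; in particular `dim W = r`. -/
theorem stmt6 {K E : Type*} [Field K] [Fintype E] (M : Matroid E) (hME : M.E = Set.univ)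
    (r : ℕ) (hr : mrk M Set.univ = r) (η : Set E → (E → K))
    (hsupp : ∀ H, IsHyperplaneOf M H → Function.support (η H) = Set.univ \ H)
    (hdep : ∀ H₁ H₂ H₃ : Set E, IsHyperplaneOf M H₁ → IsHyperplaneOf M H₂ →
      IsHyperplaneOf M H₃ → H₁ ≠ H₂ → H₁ ≠ H₃ → H₂ ≠ H₃ →
      mrk M (H₁ ∩ H₂ ∩ H₃) + 2 = mrk M Set.univ →
      ¬ LinearIndependent K ![η H₁, η H₂, η H₃]) :
    IsMatroidOf M (Submodule.span K (η '' {H : Set E | IsHyperplaneOf M H})) ∧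
    Module.finrank K ↥(Submodule.span K (η '' {H : Set E | IsHyperplaneOf M H})) = r := by
  have hW : span K (η '' {H | IsHyperplaneOf M H}) = hyperplaneSpan M η ∅ := by
    simp [hyperplaneSpan]
  have hdep' : ModularTriplesDependent M η := by
    rw [ModularTriplesDependent, hME]
    exact hdep
  have hrank (S : Set E) : mrk M S = finrank K ((hyperplaneSpan M η ∅).map (proj K S)) :=
    (SupportedOffHyperplanes.mrk_le_finrank_map_proj hsupp S).antisymm
      (hdep'.finrank_map_proj_le_mrk hsupp (hME ▸ subset_univ S))
  rw [hW, ← finrank_map_proj_univ, ← hrank, hr]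
  exact ⟨⟨hME, hrank⟩, rfl⟩
end

section
/- Let K be a field, E a finite type, W ⊆ K^E a linear subspace, and B ⊆ E a subset such that the coordinate projection π_B : K^E → K^B restricts to a linear isomorphism W ≃ K^B. Let (S_i)_{i∈B} be the family of elements of W determined by (S_i)_j = δ_{ij} for all i, j ∈ B (the normal basis of W indexed by B). Then every S_i is an elementary vector of W: S_i ≠ 0 and there is no nonzero v ∈ W with supp(v) ⊊ supp(S_i). -/
open Set Function Module Submodule

/-- An elementary vector of `W`: a nonzero element of `W` of support-minimal support. -/
def IsElementary {K E : Type*} [Field K] (W : Submodule K (E → K)) (w : E → K) : Prop :=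
  w ∈ W ∧ w ≠ 0 ∧ ∀ v ∈ W, v ≠ 0 → ¬ (Function.support v ⊂ Function.support w)

section

variable {K E : Type*} [Field K] {W : Submodule K (E → K)}

theorem isElementary_of_forall_support_subset {w : E → K} (hw : w ∈ W) (hw0 : w ≠ 0)
    (h : ∀ v ∈ W, support v ⊆ support w → ∃ c : K, v = c • w) : IsElementary W w := by
  refine ⟨hw, hw0, fun v hv hv0 hss => ?_⟩
  obtain ⟨c, rfl⟩ := h v hv hss.subset
  have hc : c ≠ 0 := by rintro rfl; exact hv0 (zero_smul K w)
  exact hss.ne (support_const_smul_of_ne_zero c w hc)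

theorem eq_of_proj_eq {B : Set E} (hB : Injective (proj K B ∘ₗ W.subtype))
    {v w : E → K} (hv : v ∈ W) (hw : w ∈ W) (h : proj K B v = proj K B w) : v = w :=
  congrArg Subtype.val (@hB ⟨v, hv⟩ ⟨w, hw⟩ h)

/-- Outside `i`, `v` vanishes on `B` because `w` does and `supp v ⊆ supp w`; so `v` and
`v i • w` have the same projection to `K^B`. -/
theorem eq_smul_of_support_subset {B : Set E} (hB : Injective (proj K B ∘ₗ W.subtype))
    {i : B} {w : E → K} (hw : w ∈ W) (hwi : w i = 1) (hw0 : ∀ j : B, i ≠ j → w j = 0)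
    {v : E → K} (hv : v ∈ W) (hvw : support v ⊆ support w) : v = v i • w := by
  refine eq_of_proj_eq hB hv (W.smul_mem _ hw) (funext fun j => ?_)
  simp only [proj, LinearMap.funLeft_apply, Pi.smul_apply, smul_eq_mul]
  by_cases hij : i = j
  · rw [← hij, hwi, mul_one]
  · rw [hw0 j hij, mul_zero]
    exact notMem_support.mp fun hvj => hvw hvj (hw0 j hij)

end

theorem stmt10_general {K E : Type*} [Field K] (W : Submodule K (E → K)) (B : Set E)
    (hB : Function.Bijective ((proj K B) ∘ₗ W.subtype))
    (S : ↥B → (E → K)) (hSW : ∀ i, S i ∈ W)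
    (hS1 : ∀ i : ↥B, S i (i : E) = 1)
    (hS0 : ∀ i j : ↥B, i ≠ j → S i (j : E) = 0) :
    ∀ i : ↥B, IsElementary W (S i) := by
  intro i
  have hS_ne : S i ≠ 0 := fun h => one_ne_zero (α := K) (by simpa [h] using (hS1 i).symm)
  exact isElementary_of_forall_support_subset (hSW i) hS_ne fun v hv hvS =>
    ⟨v i, eq_smul_of_support_subset hB.injective (hSW i) (hS1 i) (hS0 i) hv hvS⟩

/-- if `π_B` restricts to an isomorphism `W ≃ K^B` and `(S_i)_{i ∈ B}` is the
normal basis of `W` indexed by `B` (i.e. `S_i ∈ W` with `(S_i)_j = δ_{ij}` for `i, j ∈ B`),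
then every `S_i` is an elementary vector of `W`. -/
theorem stmt10 {K E : Type*} [Field K] [Fintype E] (W : Submodule K (E → K)) (B : Set E)
    (hB : Function.Bijective ((proj K B) ∘ₗ W.subtype))
    (S : ↥B → (E → K)) (hSW : ∀ i, S i ∈ W)
    (hS1 : ∀ i : ↥B, S i (i : E) = 1)
    (hS0 : ∀ i j : ↥B, i ≠ j → S i (j : E) = 0) :
    ∀ i : ↥B, IsElementary W (S i) :=
  stmt10_general W B hB S hSW hS1 hS0
end

section
/- Let K be a field, E a finite type, and W ⊆ K^E a linear subspace. Then W is spanned by its elementary vectors: every element of W is a K-linear combination of nonzero vectors w ∈ W with the property that no nonzero v ∈ W satisfies supp(v) ⊊ supp(w). -/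
/-!
Induct on the support of `w ∈ W`, which is well founded under `⊂` since `E` is finite. If `w` is
nonzero but not elementary, some nonzero `v ∈ W` has `supp v ⊂ supp w`; subtracting the multiple
of `v` that kills one coordinate of `w` in `supp v` gives `w - c • v ∈ W` with smaller support, and
`w = (w - c • v) + c • v` lies in the span by the induction hypothesis applied to both summands.
-/

open Set Function Module Submodule

theorem Function.exists_support_sub_smul_ssubset {K E : Type*} [DivisionRing K] {v w : E → K}
    (hv : v ≠ 0) (hvw : support v ⊆ support w) :
    ∃ c : K, support (w - c • v) ⊂ support w := by
  obtain ⟨i, hi⟩ := Function.ne_iff.1 hv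
  refine ⟨w i / v i, ssubset_of_subset_not_subset ?_ fun h => ?_⟩
  · calc support (w - (w i / v i) • v) ⊆ support w ∪ support ((w i / v i) • v) := support_sub _ _
      _ ⊆ support w ∪ support v := union_subset_union_right _ (support_const_smul_subset _ _)
      _ = support w := union_eq_left.2 hvw
  · exact h (hvw hi) (by simp [div_mul_cancel₀ _ hi])

theorem exists_support_ssubset_of_not_isElementary {K E : Type*} [Field K]
    {W : Submodule K (E → K)} {w : E → K} (hw : w ∈ W) (hw0 : w ≠ 0) (h : ¬ IsElementary W w) :
    ∃ v ∈ W, v ≠ 0 ∧ support v ⊂ support w := by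
  simpa [IsElementary, hw, hw0] using h

theorem mem_span_isElementary {K E : Type*} [Field K] [Finite E] {W : Submodule K (E → K)}
    {w : E → K} (hw : w ∈ W) : w ∈ span K {w : E → K | IsElementary W w} := by
  revert hw
  refine (InvImage.wf support (wellFounded_lt (α := Set E))).induction
    (C := fun w => w ∈ W → w ∈ span K {w | IsElementary W w}) w fun w ih hw => ?_
  by_cases hw0 : w = 0
  · simp [hw0]
  by_cases helem : IsElementary W w
  · exact subset_span helem
  obtain ⟨v, hvW, hv0, hvw⟩ := exists_support_ssubset_of_not_isElementary hw hw0 helem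
  obtain ⟨c, hc⟩ := exists_support_sub_smul_ssubset hv0 hvw.subset
  have hv := ih v hvw hvW
  have hrest := ih _ hc (W.sub_mem hw (W.smul_mem c hvW))
  simpa using add_mem hrest (smul_mem _ c hv)

/-- every linear subspace `W ⊆ K^E` is spanned by its elementary vectors. -/
theorem stmt11 {K E : Type*} [Field K] [Fintype E] (W : Submodule K (E → K)) :
    Submodule.span K {w : E → K | IsElementary W w} = W :=
  le_antisymm (span_le.2 fun _ hw => hw.1) fun _ hw => mem_span_isElementary hw
end

section
/- Let K be a field, E a finite type, and W ⊆ K^E a linear subspace. Then for every w ∈ W and every i ∈ supp(w), there exists an elementary vector v of W with i ∈ supp(v) and supp(v) ⊆ supp(w). In particular, the support of every element of W is a union of supports of elementary vectors of W. -/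
/-!
Among the vectors of `W` whose support contains `i` and lies in `supp w`, one with
inclusion-minimal support is elementary: if a nonzero `u ∈ W` had support strictly inside
`supp v`, then either `u` itself passes through `i`, or `v - (v j / u j) • u` for some
`j ∈ supp u` does (as `u i = 0`) while having lost the coordinate `j`; both contradict minimality.
-/
open Set Function Module Submodule

section
variable {K E : Type*} [Field K]

theorem support_sub_smul_subset_diff {u v : E → K} (huv : support u ⊆ support v) {j : E}
    (hj : u j ≠ 0) : support (v - (v j / u j) • u) ⊆ support v \ {j} := by
  intro x hx
  refine ⟨fun hvx => hx ?_, ?_⟩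
  · have hux : u x = 0 := notMem_support.1 fun h => huv h hvx
    simp [hvx, hux]
  · rintro rfl
    simp [div_mul_cancel₀ _ hj] at hx

theorem exists_mem_support_ssubset {W : Submodule K (E → K)} {u v : E → K} (hu : u ∈ W)
    (hv : v ∈ W) (hu0 : u ≠ 0) (huv : support u ⊂ support v) {i : E} (hi : i ∈ support v) :
    ∃ x ∈ W, i ∈ support x ∧ support x ⊂ support v := by
  by_cases hiu : i ∈ support u
  · exact ⟨u, hu, hiu, huv⟩
  obtain ⟨j, hj⟩ := support_nonempty_iff.2 hu0
  have hsub := support_sub_smul_subset_diff huv.subset hj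
  refine ⟨v - (v j / u j) • u, W.sub_mem hv (W.smul_mem _ hu), ?_, ?_⟩
  · simpa [notMem_support.1 hiu] using hi
  · exact hsub.trans_ssubset (sdiff_singleton_ssubset.2 (huv.subset hj))

theorem exists_isElementary_mem_support_subset [Finite E] {W : Submodule K (E → K)}
    {w : E → K} (hw : w ∈ W) {i : E} (hi : i ∈ support w) :
    ∃ v, IsElementary W v ∧ i ∈ support v ∧ support v ⊆ support w := by
  obtain ⟨v, ⟨hv, hiv, hvw⟩, hmin⟩ := (InvImage.wf support wellFounded_lt).has_min
    {v | v ∈ W ∧ i ∈ support v ∧ support v ⊆ support w} ⟨w, hw, hi, subset_rfl⟩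
  refine ⟨v, ⟨hv, support_nonempty_iff.1 ⟨i, hiv⟩, fun u hu hu0 huv => ?_⟩, hiv, hvw⟩
  obtain ⟨x, hx, hix, hxv⟩ := exists_mem_support_ssubset hu hv hu0 huv hiv
  exact hmin x ⟨hx, hix, hxv.subset.trans hvw⟩ hxv

end

/-- for every `w ∈ W` and every `i` in the support of `w` there is an
elementary vector `v` of `W` with `i ∈ supp(v) ⊆ supp(w)`; in particular the support of every
element of `W` is a union of supports of elementary vectors of `W`. -/
theorem stmt12 {K E : Type*} [Field K] [Fintype E] (W : Submodule K (E → K)) :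
    (∀ w ∈ W, ∀ i ∈ Function.support w, ∃ v : E → K, IsElementary W v ∧
      i ∈ Function.support v ∧ Function.support v ⊆ Function.support w) ∧
    (∀ w ∈ W, Function.support w =
      ⋃ v ∈ {v : E → K | IsElementary W v ∧ Function.support v ⊆ Function.support w},
        Function.support v) := by
  refine ⟨fun w hw i hi => exists_isElementary_mem_support_subset hw hi, fun w hw => ?_⟩
  refine Subset.antisymm (fun i hi => ?_) (iUnion₂_subset fun v hv => hv.2)
  obtain ⟨v, hv, hiv, hvw⟩ := exists_isElementary_mem_support_subset hw hi
  exact mem_iUnion₂.2 ⟨v, ⟨hv, hvw⟩, hiv⟩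
end

section
/- Let K be a field, E a finite type, and W ⊆ W' two linear subspaces of K^E. Then the matroid M_W is a quotient of the matroid M_{W'}: every flat of M_W is a flat of M_{W'}; equivalently, rank_{M_{W'}}(B) − rank_{M_{W'}}(A) ≥ rank_{M_W}(B) − rank_{M_W}(A) for all A ⊆ B ⊆ E. -/
/-!
For `A ⊆ B`, rank–nullity for the restriction map `π_B(W) → K^A` gives
`rank_{M_W}(B) - rank_{M_W}(A) = dim π_B(W ∩ ker π_A)`, which is monotone in `W`.
A set `F` is a flat exactly when adding any `e ∉ F` raises its rank, so this monotonicity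
carries flats of `M_W` to flats of `M_{W'}`.
-/

open Set Function Module Submodule

section LinearAlgebra

variable {K V U U' : Type*} [DivisionRing K] [AddCommGroup V] [Module K V]
  [AddCommGroup U] [Module K U] [FiniteDimensional K U] [AddCommGroup U'] [Module K U']

lemma Submodule.finrank_map_eq_finrank_map_comp_add (W : Submodule K V) (f : V →ₗ[K] U)
    (g : U →ₗ[K] U') :
    finrank K (W.map f) =
      finrank K (W.map (g ∘ₗ f)) + finrank K ((W ⊓ LinearMap.ker (g ∘ₗ f)).map f) := by
  have hrange : LinearMap.range (g.domRestrict (W.map f)) = W.map (g ∘ₗ f) := by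
    rw [LinearMap.range_domRestrict, map_comp]
  have hker : finrank K (LinearMap.ker (g.domRestrict (W.map f))) =
      finrank K ((W ⊓ LinearMap.ker (g ∘ₗ f)).map f) := by
    rw [LinearMap.ker_domRestrict, ← finrank_map_subtype_eq, map_comap_subtype,
      map_inf_eq_map_inf_comap, LinearMap.ker_comp]
  rw [← (g.domRestrict (W.map f)).finrank_range_add_finrank_ker, hrange, hker]

end LinearAlgebra

lemma proj_eq_funLeft_inclusion_comp (K : Type*) [Semiring K] {E : Type*} {A B : Set E}
    (hAB : A ⊆ B) : proj K A = LinearMap.funLeft K K (inclusion hAB) ∘ₗ proj K B := by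
  rw [proj, proj, ← LinearMap.funLeft_comp]
  rfl

section MatroidRank

variable {E : Type*} [_root_.Finite E] {M : Matroid E}

lemma Matroid.IsBasis.mrk_eq_ncard {J S : Set E} (hJ : M.IsBasis J S) : mrk M S = J.ncard := by
  refine IsGreatest.csSup_eq ⟨⟨J, ⟨hJ.indep, hJ.subset⟩, rfl⟩, ?_⟩
  rintro n ⟨I, ⟨hI, hIS⟩, rfl⟩
  obtain ⟨J', hJ', hIJ'⟩ := hI.subset_isBasis_of_subset hIS hJ.subset_ground
  calc I.ncard ≤ J'.ncard := ncard_le_ncard hIJ'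
    _ = J.ncard := by rw [ncard_def, ncard_def, hJ'.encard_eq_encard hJ]

lemma Matroid.mrk_lt_mrk_insert_iff {X : Set E} {e : E} (hX : X ⊆ M.E) (he : e ∈ M.E) :
    mrk M X < mrk M (insert e X) ↔ e ∉ M.closure X := by
  obtain ⟨I, hI⟩ := M.exists_isBasis X
  constructor
  · intro hlt heX
    have hIe : M.IsBasis I (insert e X) :=
      hI.isBasis_closure_right.isBasis_subset (hI.subset.trans (subset_insert e X))
        (insert_subset heX (M.subset_closure X hX))
    rw [hI.mrk_eq_ncard, hIe.mrk_eq_ncard] at hlt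
    exact hlt.false
  · intro heX
    have heI : e ∉ I := fun heI => heX (M.subset_closure X hX (hI.subset heI))
    rw [← hI.closure_eq_closure] at heX
    rw [hI.mrk_eq_ncard, (hI.insert_isBasis_insert_of_notMem_closure heX he).mrk_eq_ncard,
      ncard_insert_of_notMem heI]
    exact Nat.lt_succ_self _

lemma Matroid.isFlat_iff_forall_mrk_lt_mrk_insert {F : Set E} :
    M.IsFlat F ↔ F ⊆ M.E ∧ ∀ e ∈ M.E \ F, mrk M F < mrk M (insert e F) := by
  refine ⟨fun hF => ⟨hF.subset_ground, fun e he => ?_⟩, fun ⟨hFE, h⟩ => ?_⟩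
  · exact (mrk_lt_mrk_insert_iff hF.subset_ground he.1).2 (by rw [hF.closure]; exact he.2)
  · refine isFlat_iff_closure_eq.2 ((M.subset_closure F hFE).antisymm' fun e he => ?_)
    by_contra heF
    have heE := M.closure_subset_ground F he
    exact (mrk_lt_mrk_insert_iff hFE heE).1 (h e ⟨heE, heF⟩) he

end MatroidRank

namespace IsMatroidOf

variable {K E : Type*} [Field K] [_root_.Finite E] {W W' : Submodule K (E → K)} {M M' : Matroid E}

lemma mrk_eq_mrk_add_finrank (hM : IsMatroidOf M W) {A B : Set E} (hAB : A ⊆ B) :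
    mrk M B = mrk M A + finrank K ((W ⊓ LinearMap.ker (proj K A)).map (proj K B)) := by
  rw [hM.2, hM.2, proj_eq_funLeft_inclusion_comp K hAB]
  exact W.finrank_map_eq_finrank_map_comp_add _ _

-- Stated additively: in `ℕ` the differences of ranks would truncate.
lemma mrk_add_mrk_le (hM : IsMatroidOf M W) (hM' : IsMatroidOf M' W') (hWW' : W ≤ W')
    {A B : Set E} (hAB : A ⊆ B) : mrk M B + mrk M' A ≤ mrk M' B + mrk M A := by
  have hinc : finrank K ((W ⊓ LinearMap.ker (proj K A)).map (proj K B)) ≤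
      finrank K ((W' ⊓ LinearMap.ker (proj K A)).map (proj K B)) :=
    Submodule.finrank_mono (map_mono (inf_le_inf_right _ hWW'))
  rw [hM.mrk_eq_mrk_add_finrank hAB, hM'.mrk_eq_mrk_add_finrank hAB]
  omega

end IsMatroidOf

/-- if `W ⊆ W'` then `M_W` is a quotient of `M_{W'}`: every flat of `M_W` is a
flat of `M_{W'}`, and `rank_{M_{W'}}(B) − rank_{M_{W'}}(A) ≥ rank_{M_W}(B) − rank_{M_W}(A)`
for all `A ⊆ B ⊆ E`. -/
theorem stmt16 {K E : Type*} [Field K] [Fintype E] (W W' : Submodule K (E → K))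
    (hWW' : W ≤ W') (M M' : Matroid E) (hM : IsMatroidOf M W) (hM' : IsMatroidOf M' W') :
    (∀ F : Set E, M.IsFlat F → M'.IsFlat F) ∧
    (∀ A B : Set E, A ⊆ B → mrk M B - mrk M A ≤ mrk M' B - mrk M' A) := by
  refine ⟨fun F hF => ?_, fun A B hAB => ?_⟩
  · rw [Matroid.isFlat_iff_forall_mrk_lt_mrk_insert] at hF ⊢
    refine ⟨hM'.1 ▸ subset_univ F, fun e he => ?_⟩
    have hlt := hF.2 e ⟨hM.1 ▸ mem_univ e, he.2⟩
    have hle := hM.mrk_add_mrk_le hM' hWW' (subset_insert e F)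
    omega
  · have hle := hM.mrk_add_mrk_le hM' hWW' hAB
    omega
end
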